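/- arXiv:1601.07059 — 9 statements merged into one kernel-verified Lean document; each statement's English description precedes it below -/
import Mathlib

section
/- Let P be a level-regular graded poset with all levels P^{(i)} = {p ∈ P : ρ(p) = i} finite, and let A ⊆ P be an antichain with A^{(i)} = A ∩ P^{(i)}. Then the LYM number L_A = ∑_{i=0}^∞ #A^{(i)} / #P^{(i)} satisfies L_A ≤ 1. -/
/-!
Level-regularity gives the normalized matching property: counting the cover relations between
two consecutive levels in two ways shows that every `B` in level `i + 1` has a shadow in level `i`
of at least the same relative size. If `Bᵢ` denotes the set of elements of level `i` lying below
some element of `A`, then `Bᵢ` contains `Aᵢ` and, disjointly because `A` is an antichain, the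
shadow of `Bᵢ₊₁`. Downward induction on `i` gives `∑_{j ≥ i} #Aⱼ / #Pⱼ ≤ #Bᵢ / #Pᵢ`, which is at
most `1`.
-/

open scoped ENNReal
open Finset

theorem ENNReal.natCast_div_le_natCast_div {a b c d : ℕ} (hb : b ≠ 0) (hd : d ≠ 0)
    (h : a * d ≤ c * b) : (a : ℝ≥0∞) / b ≤ c / d :=
  calc (a : ℝ≥0∞) / b = a * d / (b * d) :=
        (ENNReal.mul_div_mul_right _ _ (by exact_mod_cast hd) (natCast_ne_top _)).symm
    _ ≤ c * b / (d * b) := by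
        rw [mul_comm (b : ℝ≥0∞)]; exact ENNReal.div_le_div_right (by exact_mod_cast h) _
    _ = c / d := ENNReal.mul_div_mul_right _ _ (by exact_mod_cast hb) (natCast_ne_top _)

section DoubleCounting

variable {α β : Type*} {r : α → β → Prop} [∀ a b, Decidable (r a b)] {s : Finset α}
  {t B : Finset β} {u d : ℕ}

theorem Finset.card_mul_card_le_card_filter_mul_card
    (hu : ∀ a ∈ s, #(t.bipartiteAbove r a) = u) (hd : ∀ b ∈ t, #(s.bipartiteBelow r b) = d)
    (hne : ∀ b ∈ t, ∃ a ∈ s, r a b) (hB : B ⊆ t) :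
    #B * #s ≤ #{a ∈ s | ∃ b ∈ B, r a b} * #t := by
  set N := {a ∈ s | ∃ b ∈ B, r a b}
  obtain rfl | ⟨b, hb⟩ := B.eq_empty_or_nonempty
  · simp
  have hd0 : 0 < d := by
    obtain ⟨a, ha, hab⟩ := hne b (hB hb)
    exact hd b (hB hb) ▸ card_pos.2 ⟨a, mem_filter.2 ⟨ha, hab⟩⟩
  -- all `d` neighbours of `b ∈ B` lie in `N`, and `a ∈ N` has at most `u` neighbours in `B`
  have hedges : #B * d ≤ #N * u := by
    refine card_mul_le_card_mul' r (fun b hb => (hd b (hB hb)).ge.trans (card_le_card ?_))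
      fun a ha => (hu a (mem_filter.1 ha).1).le.trans' (card_le_card (filter_subset_filter _ hB))
    intro a ha
    simp only [mem_bipartiteBelow, N, mem_filter] at ha ⊢
    exact ⟨⟨ha.1, b, hb, ha.2⟩, ha.2⟩
  have hlevels : #s * u = #t * d := card_mul_eq_card_mul r hu hd
  refine Nat.le_of_mul_le_mul_right ?_ hd0
  calc #B * #s * d = #B * d * #s := by ring
    _ ≤ #N * u * #s := by gcongr
    _ = #N * #t * d := by rw [mul_assoc, mul_comm u, hlevels, mul_assoc]

theorem Finset.card_div_card_le_card_filter_div_card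
    (hu : ∀ a ∈ s, #(t.bipartiteAbove r a) = u) (hd : ∀ b ∈ t, #(s.bipartiteBelow r b) = d)
    (hne : ∀ b ∈ t, ∃ a ∈ s, r a b) (hB : B ⊆ t) :
    (#B : ℝ≥0∞) / #t ≤ #{a ∈ s | ∃ b ∈ B, r a b} / #s := by
  obtain rfl | ⟨b, hb⟩ := B.eq_empty_or_nonempty
  · simp
  obtain ⟨a, ha, -⟩ := hne b (hB hb)
  exact ENNReal.natCast_div_le_natCast_div (card_ne_zero.2 ⟨b, hB hb⟩) (card_ne_zero.2 ⟨a, ha⟩)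
    (card_mul_card_le_card_filter_mul_card hu hd hne hB)

end DoubleCounting

theorem StrictMono.exists_covBy_of_not_isMin {P : Type*} [Preorder P] {ρ : P → ℕ}
    (hρ : StrictMono ρ) {q : P} (hq : ¬IsMin q) : ∃ p, p ⋖ q := by
  obtain ⟨p, hp⟩ := not_isMin_iff.1 hq
  obtain ⟨x, hxq, hmax⟩ := (measure fun x => ρ q - ρ x).wf.has_min (Set.Iio q) ⟨p, hp⟩
  -- `x` has maximal rank below `q`
  exact ⟨x, hxq, fun c hxc hcq => hmax c hcq (Nat.sub_lt_sub_left (hρ hxq) (hρ hxc))⟩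

section GradedPoset

variable {P : Type*} [PartialOrder P] {ρ : P → ℕ}

def HasNormalizedMatching (ρ : P → ℕ) : Prop :=
  ∀ i (B : Set P), B ⊆ {q | ρ q = i + 1} →
    (B.ncard : ℝ≥0∞) / {q | ρ q = i + 1}.ncard ≤
      {p | ρ p = i ∧ ∃ q ∈ B, p ⋖ q}.ncard / {p | ρ p = i}.ncard

namespace HasNormalizedMatching

theorem sum_Ico_le (hnm : HasNormalizedMatching ρ) (hfin : ∀ i, {p : P | ρ p = i}.Finite)
    {A : Set P} (hA : IsAntichain (· ≤ ·) A) (i k : ℕ) :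
    ∑ j ∈ Ico i (i + k), ({p | p ∈ A ∧ ρ p = j}.ncard : ℝ≥0∞) / {p | ρ p = j}.ncard ≤
      {p | ρ p = i ∧ ∃ a ∈ A, p ≤ a}.ncard / {p | ρ p = i}.ncard := by
  induction k generalizing i with
  | zero => simp
  | succ k ih =>
    set below : ℕ → Set P := fun j => {p | ρ p = j ∧ ∃ a ∈ A, p ≤ a}
    set shadow : Set P := {p | ρ p = i ∧ ∃ q ∈ below (i + 1), p ⋖ q}
    have hsub : {p | p ∈ A ∧ ρ p = i} ∪ shadow ⊆ below i := by
      rintro p (⟨hpA, hp⟩ | ⟨hp, q, ⟨-, a, haA, hqa⟩, hpq⟩)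
      · exact ⟨hp, p, hpA, le_rfl⟩
      · exact ⟨hp, a, haA, hpq.le.trans hqa⟩
    have hdisj : Disjoint {p | p ∈ A ∧ ρ p = i} shadow := by
      refine Set.disjoint_left.2 ?_
      rintro p ⟨hpA, -⟩ ⟨-, q, ⟨-, a, haA, hqa⟩, hpq⟩
      exact hA.not_lt hpA haA (hpq.lt.trans_le hqa)
    have hfin_below : (below i).Finite := (hfin i).subset fun p hp => hp.1
    rw [show i + (k + 1) = i + 1 + k by omega, sum_eq_sum_Ico_succ_bot (by omega)]
    calc _ ≤ ({p | p ∈ A ∧ ρ p = i}.ncard : ℝ≥0∞) / {p | ρ p = i}.ncard +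
          (below (i + 1)).ncard / {p | ρ p = i + 1}.ncard := add_le_add_right (ih (i + 1)) _
      _ ≤ ({p | p ∈ A ∧ ρ p = i}.ncard : ℝ≥0∞) / {p | ρ p = i}.ncard +
          shadow.ncard / {p | ρ p = i}.ncard := add_le_add_right (hnm i _ fun p hp => hp.1) _
      _ = (({p | p ∈ A ∧ ρ p = i} ∪ shadow).ncard : ℝ≥0∞) / {p | ρ p = i}.ncard := by
        rw [ENNReal.div_add_div_same, ← Nat.cast_add, Set.ncard_union_eq hdisj
          (hfin_below.subset (Set.subset_union_left.trans hsub))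
          (hfin_below.subset (Set.subset_union_right.trans hsub))]
      _ ≤ _ := ENNReal.div_le_div_right (by exact_mod_cast Set.ncard_le_ncard hsub hfin_below) _

theorem tsum_le_one (hnm : HasNormalizedMatching ρ) (hfin : ∀ i, {p : P | ρ p = i}.Finite)
    {A : Set P} (hA : IsAntichain (· ≤ ·) A) :
    ∑' i : ℕ, ({p | p ∈ A ∧ ρ p = i}.ncard : ℝ≥0∞) / {p | ρ p = i}.ncard ≤ 1 := by
  refine ENNReal.tsum_le_of_sum_range_le fun n => ?_
  rw [range_eq_Ico, ← zero_add n]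
  calc _ ≤ _ := hnm.sum_Ico_le hfin hA 0 n
    _ ≤ ({p | ρ p = 0}.ncard : ℝ≥0∞) / {p | ρ p = 0}.ncard :=
      ENNReal.div_le_div_right (by exact_mod_cast Set.ncard_le_ncard (fun _ => And.left) (hfin 0)) _
    _ ≤ 1 := ENNReal.div_self_le_one

end HasNormalizedMatching

theorem hasNormalizedMatching_of_levelRegular (hcov : ∀ a b : P, a ⋖ b → ρ b = ρ a + 1)
    (hfin : ∀ i, {p : P | ρ p = i}.Finite)
    (hup : ∀ i, ∃ u, ∀ p, ρ p = i → {q : P | p ⋖ q}.ncard = u)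
    (hdown : ∀ i, ∃ d, ∀ q, ρ q = i + 1 → {p : P | p ⋖ q}.ncard = d)
    (hlower : ∀ q, ρ q ≠ 0 → ∃ p, p ⋖ q) : HasNormalizedMatching ρ := by
  classical
  intro i B hB
  obtain ⟨u, hu⟩ := hup i
  obtain ⟨d, hd⟩ := hdown i
  obtain ⟨s, hs₀⟩ := (hfin i).exists_finset_coe
  obtain ⟨t, ht₀⟩ := (hfin (i + 1)).exists_finset_coe
  obtain ⟨B, rfl⟩ := ((hfin (i + 1)).subset hB).exists_finset_coe
  have hs : ∀ p, p ∈ s ↔ ρ p = i := fun p => Set.ext_iff.1 hs₀ p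
  have ht : ∀ q, q ∈ t ↔ ρ q = i + 1 := fun q => Set.ext_iff.1 ht₀ q
  have hst : ∀ p q, p ⋖ q → (p ∈ s ↔ q ∈ t) := fun p q hpq => by
    rw [hs, ht, hcov p q hpq, add_left_inj]
  have hN : {p | ρ p = i ∧ ∃ q ∈ (B : Set P), p ⋖ q} = ↑{p ∈ s | ∃ q ∈ B, p ⋖ q} := by
    ext p; simp [hs]
  rw [hN, ← hs₀, ← ht₀]
  simp only [Set.ncard_coe_finset]
  refine card_div_card_le_card_filter_div_card (r := (· ⋖ ·)) (u := u) (d := d)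
    (fun p hp => ?_) (fun q hq => ?_) (fun q hq => ?_) (by rwa [← coe_subset, ht₀])
  · rw [← hu p ((hs p).1 hp), ← Set.ncard_coe_finset, coe_bipartiteAbove]
    congr 1; ext q; simpa using fun hpq => (hst p q hpq).1 hp
  · rw [← hd q ((ht q).1 hq), ← Set.ncard_coe_finset, coe_bipartiteBelow]
    congr 1; ext p; simpa using fun hpq => (hst p q hpq).2 hq
  · obtain ⟨p, hpq⟩ := hlower q (by simp [(ht q).1 hq])
    exact ⟨p, (hst p q hpq).2 hq, hpq⟩

end GradedPoset

/-- **LYM inequality for level-regular graded posets.** Let `P` be a level-regular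
graded poset with all levels finite, and let `A ⊆ P` be an antichain. Then the LYM
number `∑ᵢ #A⁽ⁱ⁾ / #P⁽ⁱ⁾` is at most `1`. -/
theorem lym_level_regular_graded
    {P : Type*} [PartialOrder P] (ρ : P → ℕ)
    (hmin : ∀ p : P, (∀ q, ¬ q < p) → ρ p = 0)
    (hcov : ∀ a b : P, a ⋖ b → ρ b = ρ a + 1)
    (hmono : ∀ a b : P, a < b → ρ a < ρ b)
    (hfin : ∀ i, {p : P | ρ p = i}.Finite)
    (hup : ∀ i, ∃ u, ∀ p, ρ p = i → {q : P | p ⋖ q}.ncard = u)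
    (hdown : ∀ i, ∃ d, ∀ q, ρ q = i + 1 → {p : P | p ⋖ q}.ncard = d)
    (A : Set P) (hA : IsAntichain (· ≤ ·) A) :
    ∑' i : ℕ, ({p : P | p ∈ A ∧ ρ p = i}.ncard : ℝ≥0∞) / ({p : P | ρ p = i}.ncard : ℝ≥0∞) ≤ 1 := by
  have hlower : ∀ q, ρ q ≠ 0 → ∃ p, p ⋖ q := fun q hq =>
    StrictMono.exists_covBy_of_not_isMin (fun a b => hmono a b)
      (not_isMin_iff.2 (not_forall_not.1 (mt (hmin q) hq)))
  exact (hasNormalizedMatching_of_levelRegular hcov hfin hup hdown hlower).tsum_le_one hfin hA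
end

section
/- Let P be a level-regular graded poset with finite levels and A an antichain with maximum rank k ≥ 1. Let A' = {a ∈ A : ρ(a) < k} ∪ {p ∈ P^{(k-1)} : p ∈ δ⁻(A^{(k)})}. Then A' is also an antichain. -/
/-- Replacing the top-rank part of an antichain by its lower shadow again yields an
antichain, in a level-regular graded poset with finite levels. -/
theorem shadow_replacement_antichain
    {P : Type*} [PartialOrder P] (ρ : P → ℕ)
    (hmin : ∀ p : P, (∀ q, ¬ q < p) → ρ p = 0)
    (hcov : ∀ a b : P, a ⋖ b → ρ b = ρ a + 1)
    (hmono : ∀ a b : P, a < b → ρ a < ρ b)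
    (hfin : ∀ i, {p : P | ρ p = i}.Finite)
    (hup : ∀ i, ∃ u, ∀ p, ρ p = i → {q : P | p ⋖ q}.ncard = u)
    (hdown : ∀ i, ∃ d, ∀ q, ρ q = i + 1 → {p : P | p ⋖ q}.ncard = d)
    (A : Set P) (hA : IsAntichain (· ≤ ·) A)
    (k : ℕ) (hk : 1 ≤ k) (hmax : ∀ a ∈ A, ρ a ≤ k) (hattain : ∃ a ∈ A, ρ a = k) :
    IsAntichain (· ≤ ·)
      ({a ∈ A | ρ a < k} ∪ {p : P | ρ p = k - 1 ∧ ∃ b ∈ A, ρ b = k ∧ p ⋖ b}) := by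
  rintro x hx y hy hxy hle
  rcases hx with ⟨hxA, hxk⟩ | ⟨hxρ, b, hbA, hbk, hxb⟩
  · rcases hy with ⟨hyA, hyk⟩ | ⟨hyρ, b, hbA, hbk, hyb⟩
    · exact hA hxA hyA hxy hle
    · -- x ≤ y < b, x, b ∈ A
      have hxb : x < b := lt_of_le_of_lt hle hyb.lt
      exact hA hxA hbA (fun h => by subst h; exact lt_irrefl x hxb) hxb.le
  · rcases hy with ⟨hyA, hyk⟩ | ⟨hyρ, c, hcA, hck, hyc⟩
    · -- x ≤ y, ρ x = k-1, ρ y < k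
      rcases eq_or_lt_of_le hle with rfl | hlt
      · exact hA hyA hbA (fun h => by subst h; exact lt_irrefl x hxb.lt) hxb.lt.le
      · have := hmono _ _ hlt
        omega
    · rcases eq_or_lt_of_le hle with rfl | hlt
      · exact hxy rfl
      · have := hmono _ _ hlt
        omega
end

section
/- Let G be a bipartite multigraph between finite sets X and Y that is connected, in which every vertex of X has degree u > 1 and every vertex of Y has degree d > 1. If B ⊆ Y is a nonempty proper subset of Y, then #N(B)/#X > #B/#Y strictly, where N(B) ⊆ X is the neighbourhood of B. -/
/-- Adjacency relation of a bipartite multigraph with parts `X` and `Y` and edge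
multiplicities `m`. -/
def BipAdj {X Y : Type*} (m : X → Y → ℕ) : (X ⊕ Y) → (X ⊕ Y) → Prop
  | Sum.inl x, Sum.inr y => 0 < m x y
  | Sum.inr y, Sum.inl x => 0 < m x y
  | _, _ => False

/-- In a connected biregular bipartite multigraph with degrees `u > 1` on `X` and
`d > 1` on `Y`, the neighbourhood of a nonempty proper subset `B ⊆ Y` has strictly
larger density: `#N(B)/#X > #B/#Y`. -/
theorem connected_biregular_strict_expansion
    {X Y : Type*} [Fintype X] [Fintype Y] (m : X → Y → ℕ) (u d : ℕ)
    (hu1 : 1 < u) (hd1 : 1 < d)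
    (hX : ∀ x : X, ∑ y : Y, m x y = u) (hY : ∀ y : Y, ∑ x : X, m x y = d)
    (hconn : ∀ a b : X ⊕ Y, Relation.ReflTransGen (BipAdj m) a b)
    (B : Set Y) (hB : B.Nonempty) (hBne : B ≠ Set.univ) :
    (B.ncard : ℝ) / Fintype.card Y < ({x : X | ∃ y ∈ B, 0 < m x y}.ncard : ℝ) / Fintype.card X := by
  classical
  set N : Set X := {x : X | ∃ y ∈ B, 0 < m x y} with hNdef
  obtain ⟨y0, hy0⟩ := hB
  obtain ⟨y1, hy1⟩ : ∃ y, y ∉ B := by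
    by_contra h
    push_neg at h
    exact hBne (Set.eq_univ_of_forall h)
  -- key: there is an edge from N to outside B
  have hkey : ∃ x ∈ N, ∃ y, y ∉ B ∧ 0 < m x y := by
    by_contra hcon
    push_neg at hcon
    have hstep : ∀ a b : X ⊕ Y, BipAdj m a b →
        (match a with | Sum.inl x => x ∈ N | Sum.inr y => y ∈ B) →
        (match b with | Sum.inl x => x ∈ N | Sum.inr y => y ∈ B) := by
      rintro (x | y) (x' | y') hab hpa
      · exact hab.elim
      · by_contra hy'
        have hab2 : 0 < m x y' := hab
        have := hcon x hpa y' hy'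
        omega
      · exact ⟨y, hpa, hab⟩
      · exact hab.elim
    have hpres : ∀ {a b : X ⊕ Y}, Relation.ReflTransGen (BipAdj m) a b →
        (match a with | Sum.inl x => x ∈ N | Sum.inr y => y ∈ B) →
        (match b with | Sum.inl x => x ∈ N | Sum.inr y => y ∈ B) := by
      intro a b h
      induction h with
      | refl => exact id
      | tail h1 h2 ih => exact fun hp => hstep _ _ h2 (ih hp)
    exact hy1 (hpres (hconn (Sum.inr y0) (Sum.inr y1)) hy0)
  obtain ⟨x0, hx0N, yw, hywB, hywm⟩ := hkey
  set Bt : Finset Y := B.toFinset with hBt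
  set Nt : Finset X := N.toFinset with hNt
  have hBcard : B.ncard = Bt.card := Set.ncard_eq_toFinset_card' B
  have hNcard : N.ncard = Nt.card := Set.ncard_eq_toFinset_card' N
  -- d * |B| = sum over x of sum over y in B
  have hdB : d * Bt.card = ∑ x : X, ∑ y ∈ Bt, m x y := by
    rw [Finset.sum_comm]
    rw [Finset.sum_congr rfl (fun y _ => hY y)]
    simp [mul_comm]
  -- restrict to Nt
  have hrestrict : ∑ x : X, ∑ y ∈ Bt, m x y = ∑ x ∈ Nt, ∑ y ∈ Bt, m x y := by
    refine (Finset.sum_subset (Finset.subset_univ Nt) ?_).symm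
    intro x _ hxN
    refine Finset.sum_eq_zero fun y hy => ?_
    by_contra h
    exact hxN (by
      rw [hNt, Set.mem_toFinset]
      exact ⟨y, (Set.mem_toFinset.mp hy), Nat.pos_of_ne_zero h⟩)
  -- strict inequality
  have hstrict : ∑ x ∈ Nt, ∑ y ∈ Bt, m x y < ∑ x ∈ Nt, ∑ y : Y, m x y := by
    refine Finset.sum_lt_sum (fun i _ => Finset.sum_le_sum_of_subset (Finset.subset_univ _)) ?_
    refine ⟨x0, by rw [hNt, Set.mem_toFinset]; exact hx0N, ?_⟩
    refine Finset.sum_lt_sum_of_subset (Finset.subset_univ _) (Finset.mem_univ yw) ?_ hywm ?_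
    · rw [hBt, Set.mem_toFinset]; exact hywB
    · intro j _ _; exact Nat.zero_le _
  have huN : ∑ x ∈ Nt, ∑ y : Y, m x y = u * Nt.card := by
    rw [Finset.sum_congr rfl (fun x _ => hX x)]
    simp [mul_comm]
  have hlt : d * Bt.card < u * Nt.card := by
    rw [hdB, hrestrict, ← huN]; exact hstrict
  -- totals
  have htot : u * Fintype.card X = d * Fintype.card Y := by
    have h1 : ∑ x : X, ∑ y : Y, m x y = u * Fintype.card X := by
      rw [Finset.sum_congr rfl (fun x _ => hX x)]; simp [mul_comm]
    have h2 : ∑ x : X, ∑ y : Y, m x y = d * Fintype.card Y := by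
      rw [Finset.sum_comm, Finset.sum_congr rfl (fun y _ => hY y)]; simp [mul_comm]
    rw [← h1, h2]
  have hYpos : 0 < Fintype.card Y := Fintype.card_pos_iff.mpr ⟨y0⟩
  have hXpos : 0 < Fintype.card X := by
    rcases isEmpty_or_nonempty X with hE | hNE
    · exfalso
      have := hY y0
      simp at this
      omega
    · exact Fintype.card_pos_iff.mpr hNE
  have hnat : Bt.card * Fintype.card X < Nt.card * Fintype.card Y := by
    have : d * (Bt.card * Fintype.card X) < d * (Nt.card * Fintype.card Y) := by
      calc d * (Bt.card * Fintype.card X) = (d * Bt.card) * Fintype.card X := by ring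
        _ < (u * Nt.card) * Fintype.card X := by
            exact (Nat.mul_lt_mul_right hXpos).mpr hlt
        _ = Nt.card * (u * Fintype.card X) := by ring
        _ = Nt.card * (d * Fintype.card Y) := by rw [htot]
        _ = d * (Nt.card * Fintype.card Y) := by ring
    exact Nat.lt_of_mul_lt_mul_left this
  rw [hBcard, hNcard, div_lt_div_iff₀ (by exact_mod_cast hYpos) (by exact_mod_cast hXpos)]
  exact_mod_cast hnat
end

section
/- Let P be a level-regular graded poset with finite levels such that between levels i and i+1 the up-degrees are u > 1, the down-degrees are d > 1, the bipartite graph induced by levels i and i+1 of the Hasse diagram is connected, and g := gcd(#P^{(i)}, #P^{(i+1)}) > 1. Set a_i = ((g-1)/g)·#P^{(i)}, a_{i+1} = (1/g)·#P^{(i+1)}, and a_j = 0 otherwise. Then a_i and a_{i+1} are integers, ∑_j a_j / #P^{(j)} ≤ 1, yet there is no antichain A ⊆ P with #A^{(j)} = a_j for all j. -/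
open scoped ENNReal

/-- **Failure of the converse McMillan theorem in level-regular graded posets.**
In a level-regular graded poset with finite levels, if between levels `i` and `i+1`
the up-degrees are `u > 1`, the down-degrees are `d > 1`, the bipartite graph induced
by these two levels of the Hasse diagram is connected, and
`g = gcd(#P⁽ⁱ⁾, #P⁽ⁱ⁺¹⁾) > 1`, then the parameters `aᵢ = ((g-1)/g)·#P⁽ⁱ⁾`,
`aᵢ₊₁ = (1/g)·#P⁽ⁱ⁺¹⁾`, `aⱼ = 0` otherwise, are integers with LYM sum at most `1`,
yet no antichain realizes them. -/
theorem no_antichain_counterexample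
    {P : Type*} [PartialOrder P] (ρ : P → ℕ)
    (hmin : ∀ p : P, (∀ q, ¬ q < p) → ρ p = 0)
    (hcov : ∀ a b : P, a ⋖ b → ρ b = ρ a + 1)
    (hmono : ∀ a b : P, a < b → ρ a < ρ b)
    (hfin : ∀ j, {p : P | ρ p = j}.Finite)
    (hupreg : ∀ j, ∃ u, ∀ p, ρ p = j → {q : P | p ⋖ q}.ncard = u)
    (hdownreg : ∀ j, ∃ d, ∀ q, ρ q = j + 1 → {p : P | p ⋖ q}.ncard = d)
    (i : ℕ) (u d : ℕ) (hu1 : 1 < u) (hd1 : 1 < d)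
    (hu : ∀ p, ρ p = i → {q : P | p ⋖ q}.ncard = u)
    (hd : ∀ q, ρ q = i + 1 → {p : P | p ⋖ q}.ncard = d)
    (hconn : ∀ x y : P, (ρ x = i ∨ ρ x = i + 1) → (ρ y = i ∨ ρ y = i + 1) →
      Relation.ReflTransGen
        (fun p q => (ρ p = i ∧ ρ q = i + 1 ∧ p ⋖ q) ∨ (ρ q = i ∧ ρ p = i + 1 ∧ q ⋖ p)) x y)
    (g : ℕ) (hg : g = Nat.gcd {p : P | ρ p = i}.ncard {p : P | ρ p = i + 1}.ncard)
    (hg1 : 1 < g)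
    (a : ℕ → ℕ)
    (hai : a i = (g - 1) * ({p : P | ρ p = i}.ncard / g))
    (hai1 : a (i + 1) = {p : P | ρ p = i + 1}.ncard / g)
    (haj : ∀ j, j ≠ i → j ≠ i + 1 → a j = 0) :
    (g ∣ {p : P | ρ p = i}.ncard ∧ g ∣ {p : P | ρ p = i + 1}.ncard) ∧
    (∑' j : ℕ, (a j : ℝ≥0∞) / ({p : P | ρ p = j}.ncard : ℝ≥0∞) ≤ 1) ∧
    ¬ ∃ A : Set P, IsAntichain (· ≤ ·) A ∧ ∀ j, {p : P | p ∈ A ∧ ρ p = j}.ncard = a j := by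
  classical
  -- cover level facts
  have covlvl : ∀ p q : P, p ⋖ q → ρ p = i → ρ q = i + 1 := by
    intro p q h hp; rw [hcov p q h, hp]
  have covlvl' : ∀ p q : P, p ⋖ q → ρ q = i + 1 → ρ p = i := by
    intro p q h hq; have := hcov p q h; omega
  have hfinup : ∀ p : P, ρ p = i → {q : P | p ⋖ q}.Finite := fun p hp =>
    (hfin (i + 1)).subset fun q hq => covlvl p q hq hp
  have hfindown : ∀ q : P, ρ q = i + 1 → {p : P | p ⋖ q}.Finite := fun q hq =>
    (hfin i).subset fun p hp => covlvl' p q hp hq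
  set Fi : Finset P := (hfin i).toFinset with hFi
  set Fi1 : Finset P := (hfin (i + 1)).toFinset with hFi1
  have hmemFi : ∀ p : P, p ∈ Fi ↔ ρ p = i := by
    intro p; simp [hFi, (hfin i).mem_toFinset]
  have hmemFi1 : ∀ p : P, p ∈ Fi1 ↔ ρ p = i + 1 := by
    intro p; simp [hFi1, (hfin (i + 1)).mem_toFinset]
  have hNi : {p : P | ρ p = i}.ncard = Fi.card := Set.ncard_eq_toFinset_card _ (hfin i)
  have hNi1 : {p : P | ρ p = i + 1}.ncard = Fi1.card :=
    Set.ncard_eq_toFinset_card _ (hfin (i + 1))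
  -- up-degree as finset card
  have hup_card : ∀ p ∈ Fi, (Fi1.bipartiteAbove (· ⋖ ·) p).card = u := by
    intro p hp
    have hpi : ρ p = i := (hmemFi p).mp hp
    have hset : Fi1.bipartiteAbove (· ⋖ ·) p = (hfinup p hpi).toFinset := by
      ext q
      simp only [Finset.mem_bipartiteAbove, Set.Finite.mem_toFinset, Set.mem_setOf_eq, hmemFi1]
      exact ⟨fun h => h.2, fun h => ⟨covlvl p q h hpi, h⟩⟩
    rw [hset, ← Set.ncard_eq_toFinset_card _ (hfinup p hpi)]
    exact hu p hpi
  -- down-degree as finset card, for any subset of Fi containing all lower covers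
  have hdown_card : ∀ q ∈ Fi1, (Fi.bipartiteBelow (· ⋖ ·) q).card = d := by
    intro q hq
    have hqi : ρ q = i + 1 := (hmemFi1 q).mp hq
    have hset : Fi.bipartiteBelow (· ⋖ ·) q = (hfindown q hqi).toFinset := by
      ext p
      simp only [Finset.mem_bipartiteBelow, Set.Finite.mem_toFinset, Set.mem_setOf_eq, hmemFi]
      exact ⟨fun h => h.2, fun h => ⟨covlvl' p q h hqi, h⟩⟩
    rw [hset, ← Set.ncard_eq_toFinset_card _ (hfindown q hqi)]
    exact hd q hqi
  -- handshake
  have handshake : Fi.card * u = Fi1.card * d := by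
    have h1 : ∑ p ∈ Fi, (Fi1.bipartiteAbove (· ⋖ ·) p).card
        = ∑ q ∈ Fi1, (Fi.bipartiteBelow (· ⋖ ·) q).card :=
      Finset.sum_card_bipartiteAbove_eq_sum_card_bipartiteBelow _
    rw [Finset.sum_congr rfl hup_card, Finset.sum_congr rfl hdown_card,
      Finset.sum_const, Finset.sum_const, smul_eq_mul, smul_eq_mul] at h1
    exact h1
  -- divisibility
  have hdvd1 : g ∣ {p : P | ρ p = i}.ncard := hg ▸ Nat.gcd_dvd_left _ _
  have hdvd2 : g ∣ {p : P | ρ p = i + 1}.ncard := hg ▸ Nat.gcd_dvd_right _ _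
  -- nonemptiness of the two levels
  have hNi1_ne : Fi1.card ≠ 0 → Fi.card ≠ 0 := by
    intro h1
    obtain ⟨q, hq⟩ := Finset.card_ne_zero.mp h1
    have hqi : ρ q = i + 1 := (hmemFi1 q).mp hq
    have : {p : P | p ⋖ q}.ncard = d := hd q hqi
    obtain ⟨p, hp⟩ := Set.nonempty_of_ncard_ne_zero (by omega : {p : P | p ⋖ q}.ncard ≠ 0)
    have : p ∈ Fi := (hmemFi p).mpr (covlvl' p q hp hqi)
    exact Finset.card_ne_zero.mpr ⟨p, this⟩
  have hNi_pos : Fi.card ≠ 0 := by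
    intro h0
    have h1 : Fi1.card = 0 := by
      by_contra h1
      exact hNi1_ne h1 h0
    rw [hg, hNi, hNi1, h0, h1] at hg1
    simp at hg1
  have hNi1_pos : Fi1.card ≠ 0 := by
    obtain ⟨p, hp⟩ := Finset.card_ne_zero.mp hNi_pos
    have hpi : ρ p = i := (hmemFi p).mp hp
    have : {q : P | p ⋖ q}.ncard = u := hu p hpi
    obtain ⟨q, hq⟩ := Set.nonempty_of_ncard_ne_zero (by omega : {q : P | p ⋖ q}.ncard ≠ 0)
    exact Finset.card_ne_zero.mpr ⟨q, (hmemFi1 q).mpr (covlvl p q hq hpi)⟩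
  -- names for quotients
  set k : ℕ := {p : P | ρ p = i}.ncard / g with hk
  set m : ℕ := {p : P | ρ p = i + 1}.ncard / g with hm
  have hgk : {p : P | ρ p = i}.ncard = g * k := (Nat.mul_div_cancel' hdvd1).symm
  have hgm : {p : P | ρ p = i + 1}.ncard = g * m := (Nat.mul_div_cancel' hdvd2).symm
  have hk_pos : k ≠ 0 := by
    intro h0; rw [h0, Nat.mul_zero] at hgk; rw [hNi] at hgk; exact hNi_pos hgk
  have hm_pos : m ≠ 0 := by
    intro h0; rw [h0, Nat.mul_zero] at hgm; rw [hNi1] at hgm; exact hNi1_pos hgm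
  have hg0 : (g : ℕ) ≠ 0 := by omega
  refine ⟨⟨hdvd1, hdvd2⟩, ?_, ?_⟩
  · -- LYM sum equals 1
    have hzero : ∀ j ∉ ({i, i + 1} : Finset ℕ),
        (a j : ℝ≥0∞) / ({p : P | ρ p = j}.ncard : ℝ≥0∞) = 0 := by
      intro j hj
      simp only [Finset.mem_insert, Finset.mem_singleton] at hj
      push_neg at hj
      rw [haj j hj.1 hj.2]
      simp
    rw [tsum_eq_sum hzero, Finset.sum_pair (by omega : i ≠ i + 1)]
    have e1 : (a i : ℝ≥0∞) / ({p : P | ρ p = i}.ncard : ℝ≥0∞)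
        = ((g - 1 : ℕ) : ℝ≥0∞) / (g : ℝ≥0∞) := by
      rw [hai, hgk]
      push_cast
      exact ENNReal.mul_div_mul_right _ _ (by exact_mod_cast hk_pos) (ENNReal.natCast_ne_top k)
    have e2 : (a (i + 1) : ℝ≥0∞) / ({p : P | ρ p = (i + 1)}.ncard : ℝ≥0∞)
        = 1 / (g : ℝ≥0∞) := by
      rw [hai1, hgm]
      push_cast
      rw [show ((m : ℝ≥0∞)) / ((g : ℝ≥0∞) * m) = 1 * m / ((g : ℝ≥0∞) * m) by rw [one_mul]]
      exact ENNReal.mul_div_mul_right _ _ (by exact_mod_cast hm_pos) (ENNReal.natCast_ne_top m)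
    rw [e1, e2, ENNReal.div_add_div_same]
    have : ((g - 1 : ℕ) : ℝ≥0∞) + 1 = (g : ℝ≥0∞) := by
      rw [show ((g : ℝ≥0∞)) = (((g - 1) + 1 : ℕ) : ℝ≥0∞) by congr 1; omega]
      push_cast; ring
    rw [this, ENNReal.div_self (by exact_mod_cast hg0) (ENNReal.natCast_ne_top g)]
  · -- no antichain
    rintro ⟨A, hA, hcard⟩
    -- finsets for A at the two levels
    have hSfin : {p : P | p ∈ A ∧ ρ p = i}.Finite := (hfin i).subset fun p hp => hp.2
    have hTfin : {p : P | p ∈ A ∧ ρ p = i + 1}.Finite := (hfin (i + 1)).subset fun p hp => hp.2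
    set FS : Finset P := hSfin.toFinset with hFS
    set FT : Finset P := hTfin.toFinset with hFT
    have hmemFS : ∀ p : P, p ∈ FS ↔ p ∈ A ∧ ρ p = i := by
      intro p; simp [hFS, hSfin.mem_toFinset]
    have hmemFT : ∀ p : P, p ∈ FT ↔ p ∈ A ∧ ρ p = i + 1 := by
      intro p; simp [hFT, hTfin.mem_toFinset]
    have hFScard : FS.card = (g - 1) * k := by
      rw [← Set.ncard_eq_toFinset_card _ hSfin, hcard i, hai]
    have hFTcard : FT.card = m := by
      rw [← Set.ncard_eq_toFinset_card _ hTfin, hcard (i + 1), hai1]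
    have hFSsub : FS ⊆ Fi := by
      intro p hp; exact (hmemFi p).mpr ((hmemFS p).mp hp).2
    have hFTsub : FT ⊆ Fi1 := by
      intro p hp; exact (hmemFi1 p).mpr ((hmemFT p).mp hp).2
    set FC : Finset P := Fi \ FS with hFC
    have hFicard : Fi.card = g * k := by rw [← hNi]; exact hgk
    have hFi1card : Fi1.card = g * m := by rw [← hNi1]; exact hgm
    have hFCcard : FC.card = k := by
      have h1 : (g - 1) * k = g * k - k := by rw [Nat.sub_mul, one_mul]
      have h2 : k ≤ g * k := Nat.le_mul_of_pos_left k (by omega)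
      rw [hFC, Finset.card_sdiff_of_subset hFSsub, hFicard, hFScard, h1, Nat.sub_sub_self h2]
    -- no edges between FS and FT
    have hnoedge : ∀ p ∈ A, ∀ q ∈ A, ¬ p ⋖ q := by
      intro p hp q hq hcq
      exact hA hp hq (ne_of_lt hcq.lt) (le_of_lt hcq.lt)
    -- lower covers of elements of FT lie in FC
    have hTdown : ∀ q ∈ FT, ∀ p : P, p ⋖ q → p ∈ FC := by
      intro q hq p hpq
      obtain ⟨hqA, hqi⟩ := (hmemFT q).mp hq
      have hpi : ρ p = i := covlvl' p q hpq hqi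
      rw [hFC, Finset.mem_sdiff]
      refine ⟨(hmemFi p).mpr hpi, fun hpS => ?_⟩
      exact hnoedge p ((hmemFS p).mp hpS).1 q hqA hpq
    -- double counting : edges from FT all go to FC and saturate FC's up-degrees
    have hTC : ∀ q ∈ FT, FC.bipartiteBelow (· ⋖ ·) q = Fi.bipartiteBelow (· ⋖ ·) q := by
      intro q hq
      ext p
      simp only [Finset.mem_bipartiteBelow]
      constructor
      · rintro ⟨hp, hpq⟩
        exact ⟨(Finset.sdiff_subset) hp, hpq⟩
      · rintro ⟨hp, hpq⟩
        exact ⟨hTdown q hq p hpq, hpq⟩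
    have hsum1 : ∑ q ∈ FT, (FC.bipartiteBelow (· ⋖ ·) q).card = m * d := by
      rw [Finset.sum_congr rfl (fun q hq => by rw [hTC q hq, hdown_card q (hFTsub hq)]),
        Finset.sum_const, hFTcard, smul_eq_mul]
    have hsum2 : ∑ p ∈ FC, (FT.bipartiteAbove (· ⋖ ·) p).card = m * d := by
      rw [Finset.sum_card_bipartiteAbove_eq_sum_card_bipartiteBelow]
      exact hsum1
    have hmd : m * d = k * u := by
      have : g * (k * u) = g * (m * d) := by
        calc g * (k * u) = g * k * u := by ring
          _ = Fi.card * u := by rw [hFicard]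
          _ = Fi1.card * d := handshake
          _ = g * m * d := by rw [hFi1card]
          _ = g * (m * d) := by ring
      exact (Nat.eq_of_mul_eq_mul_left (by omega : 0 < g) this).symm
    have htermle : ∀ p ∈ FC, (FT.bipartiteAbove (· ⋖ ·) p).card
        ≤ (Fi1.bipartiteAbove (· ⋖ ·) p).card := by
      intro p _
      exact Finset.card_le_card (Finset.filter_subset_filter _ hFTsub)
    have hsumfull : ∑ p ∈ FC, (Fi1.bipartiteAbove (· ⋖ ·) p).card = k * u := by
      rw [Finset.sum_congr rfl (fun p hp => hup_card p (Finset.sdiff_subset hp)),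
        Finset.sum_const, hFCcard, smul_eq_mul]
    have hsumeq : ∑ p ∈ FC, (FT.bipartiteAbove (· ⋖ ·) p).card
        = ∑ p ∈ FC, (Fi1.bipartiteAbove (· ⋖ ·) p).card := by
      rw [hsum2, hsumfull, hmd]
    have htermeq : ∀ p ∈ FC, (FT.bipartiteAbove (· ⋖ ·) p).card
        = (Fi1.bipartiteAbove (· ⋖ ·) p).card :=
      (Finset.sum_eq_sum_iff_of_le htermle).mp hsumeq
    -- upper covers of elements of FC lie in FT
    have hCup : ∀ p ∈ FC, ∀ q : P, p ⋖ q → q ∈ FT := by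
      intro p hp q hpq
      have hpi : ρ p = i := (hmemFi p).mp (Finset.sdiff_subset hp)
      have hseteq : FT.bipartiteAbove (· ⋖ ·) p = Fi1.bipartiteAbove (· ⋖ ·) p :=
        Finset.eq_of_subset_of_card_le (Finset.filter_subset_filter _ hFTsub)
          (le_of_eq (htermeq p hp).symm)
      have hq1 : q ∈ Fi1.bipartiteAbove (· ⋖ ·) p :=
        (Finset.mem_bipartiteAbove (· ⋖ ·)).mpr ⟨(hmemFi1 q).mpr (covlvl p q hpq hpi), hpq⟩
      rw [← hseteq] at hq1
      exact ((Finset.mem_bipartiteAbove (· ⋖ ·)).mp hq1).1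
    -- now use connectivity starting from some element of FT
    obtain ⟨q0, hq0⟩ := Finset.card_ne_zero.mp (by rw [hFTcard]; exact hm_pos)
    have hq0lvl : ρ q0 = i + 1 := ((hmemFT q0).mp hq0).2
    have hclosure : ∀ x : P, (ρ x = i ∨ ρ x = i + 1) →
        (ρ x = i + 1 → x ∈ FT) ∧ (ρ x = i → x ∈ FC) := by
      intro x hx
      have hpath := hconn q0 x (Or.inr hq0lvl) hx
      clear hx
      induction hpath with
      | refl => exact ⟨fun _ => hq0, fun h => by omega⟩
      | tail hpre hstep ih =>
        rename_i b c
        rcases hstep with ⟨hbi, hci, hbc⟩ | ⟨hci, hbi, hcb⟩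
        · have hb : b ∈ FC := (ih).2 hbi
          exact ⟨fun _ => hCup b hb c hbc, fun h => by omega⟩
        · have hb : b ∈ FT := (ih).1 hbi
          exact ⟨fun h => by omega, fun _ => hTdown b hb c hcb⟩
    have hFi1_sub_FT : Fi1 ⊆ FT := by
      intro x hx
      have hxl : ρ x = i + 1 := (hmemFi1 x).mp hx
      exact (hclosure x (Or.inr hxl)).1 hxl
    have : g * m ≤ m := by
      rw [← hFi1card, ← hFTcard]
      exact Finset.card_le_card hFi1_sub_FT
    have : 2 * m ≤ g * m := Nat.mul_le_mul_right m (by omega)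
    omega
end

section
/- If c : S → T_k is a subsequence-free permutation code, with a_l codewords in T_k^l, then P_c = ∑_{l=1}^k a_l / (C(k,l)·l!) ≤ 1. -/
/-!
A codeword `σ` of length `l` is a prefix of exactly `(k - l)!` of the `k!` permutations of `[k]`.
A subsequence-free code is in particular prefix-free, so these sets of permutations are pairwise
disjoint and `∑ₛ (k - |c s|)! ≤ k!`. Dividing by `k!` gives the claim, since
`C(k, l) · l! = k! / (k - l)!`.
-/

open Finset
open scoped Nat

namespace List

variable {α : Type*} [DecidableEq α]

theorem Subperm.append_diff_perm {σ l : List α} (h : σ <+~ l) : σ ++ l.diff σ ~ l :=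
  subperm_append_diff_self_of_count_le (subperm_ext_iff.mp h)

theorem card_filter_prefix_permutations {σ l : List α} (hσ : σ <+~ l) (hl : l.Nodup) :
    #{π ∈ l.permutations.toFinset | σ <+: π} = (l.length - σ.length)! := by
  have hdiff : σ ++ l.diff σ ~ l := hσ.append_diff_perm
  have himage : {π ∈ l.permutations.toFinset | σ <+: π}
      = (l.diff σ).permutations.toFinset.image (σ ++ ·) := by
    ext π
    simp only [Finset.mem_filter, mem_image, mem_toFinset, mem_permutations]
    constructor
    · rintro ⟨hπ, τ, rfl⟩
      exact ⟨τ, (perm_append_left_iff σ).mp (hπ.trans hdiff.symm), rfl⟩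
    · rintro ⟨τ, hτ, rfl⟩
      exact ⟨((perm_append_left_iff σ).mpr hτ).trans hdiff, τ, rfl⟩
  rw [himage, card_image_of_injective _ (append_right_injective σ),
    toFinset_card_of_nodup (nodup_permutations _ hl.diff), length_permutations]
  have := hdiff.length_eq
  rw [length_append] at this
  congr 1
  omega

theorem sum_factorial_sub_length_le_of_prefix_free {ι : Type*} [Fintype ι] {l : List α}
    (hl : l.Nodup) (c : ι → List α) (hsub : ∀ i, c i <+~ l)
    (hfree : ∀ i j, c i <+: c j → i = j) :
    ∑ i, (l.length - (c i).length)! ≤ l.length ! := by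
  set P := l.permutations.toFinset
  set B : ι → Finset (List α) := fun i => {π ∈ P | c i <+: π}
  have hdisj : ((univ : Finset ι) : Set ι).PairwiseDisjoint B := by
    intro i _ j _ hij
    refine Finset.disjoint_left.mpr fun π hπi hπj => hij ?_
    rcases prefix_or_prefix_of_prefix (Finset.mem_filter.mp hπi).2 (Finset.mem_filter.mp hπj).2
      with h | h
    · exact hfree i j h
    · exact (hfree j i h).symm
  calc ∑ i, (l.length - (c i).length)! = ∑ i, #(B i) :=
        sum_congr rfl fun i _ => (card_filter_prefix_permutations (hsub i) hl).symm
    _ = #(univ.biUnion B) := (card_biUnion hdisj).symm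
    _ ≤ #P := card_le_card (biUnion_subset.mpr fun i _ => Finset.filter_subset _ _)
    _ = l.length ! := by
      rw [toFinset_card_of_nodup (nodup_permutations _ hl), length_permutations]

end List

theorem Nat.one_div_choose_mul_factorial {K : Type*} [Field K] [CharZero K] {n k : ℕ}
    (h : k ≤ n) : 1 / (n.choose k * k ! : K) = (n - k)! / n ! := by
  have hk : (k ! : K) ≠ 0 := mod_cast k.factorial_ne_zero
  rw [Nat.cast_choose K h]
  field_simp

/-- **Kraft-type inequality for subsequence-free permutation codes** `c : S → T_k`:
`P_c = ∑_{l=1}^k a_l / (C(k,l)·l!) ≤ 1`. -/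
theorem permutation_constant_le_one_subsequence_free
    {S : Type*} [Fintype S] (k : ℕ) (c : S → List (Fin k))
    (hcode : ∀ s, (c s).Nodup ∧ 1 ≤ (c s).length ∧ (c s).length ≤ k)
    (hinj : Function.Injective c)
    (hfree : ∀ s t : S, (c s).Sublist (c t) → c s = c t)
    (a : ℕ → ℕ) (ha : ∀ l, a l = Nat.card {s : S // (c s).length = l}) :
    ∑ l ∈ Finset.Icc 1 k, (a l : ℝ) / (k.choose l * l.factorial) ≤ 1 := by
  have hprefix : ∀ s t, c s <+: c t → s = t := fun s t h => hinj (hfree s t h.sublist)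
  have hkraft := List.sum_factorial_sub_length_le_of_prefix_free (List.nodup_finRange k) c
    (fun s => List.subperm_of_subset (hcode s).1 fun x _ => List.mem_finRange x) hprefix
  rw [List.length_finRange] at hkraft
  have hlen : ∀ s ∈ univ, (c s).length ∈ Icc 1 k :=
    fun s _ => mem_Icc.mpr (hcode s).2
  calc ∑ l ∈ Icc 1 k, (a l : ℝ) / (k.choose l * l !)
      = ∑ l ∈ Icc 1 k, ∑ s with (c s).length = l,
          1 / (k.choose (c s).length * (c s).length ! : ℝ) := by
        refine sum_congr rfl fun l _ => ?_
        rw [sum_congr rfl fun s hs => by rw [(mem_filter.mp hs).2], sum_const, ha,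
          Nat.card_eq_fintype_card, Fintype.card_subtype, nsmul_eq_mul, mul_one_div]
    _ = ∑ s, ((k - (c s).length)! : ℝ) / k ! := by
        rw [sum_fiberwise_of_maps_to hlen]
        exact sum_congr rfl fun s _ => Nat.one_div_choose_mul_factorial (hcode s).2.2
    _ ≤ 1 := by
        rw [← sum_div, div_le_one (by positivity)]
        exact_mod_cast hkraft
end

section
/- If c : S → 𝕋_k is a pattern-free permutation code with a_l codewords in 𝕊_l, then ℙ_c = ∑_{l=1}^k a_l / l! ≤ 1. -/
/-!
For `l ≤ k`, every `τ ∈ 𝕊_k` has a pattern on its first `l` positions. Right multiplication by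
the permutations of those positions shifts this prefix pattern by right multiplication in `𝕊_l`,
so each `σ ∈ 𝕊_l` is the prefix pattern of exactly `k!/l!` permutations of `𝕊_k`. If one `τ` had
two codewords as prefix patterns, the shorter would be a pattern in the longer; hence the
fibres of the codewords are disjoint subsets of `𝕊_k`, and `∑ a_l k!/l! ≤ k!`.
-/

/-- `σ ∈ 𝕊_l` is a pattern in `τ ∈ 𝕊_m` if some increasing choice of indices of `τ`
has the same relative order as `σ`. -/
def IsPattern {l m : ℕ} (σ : Equiv.Perm (Fin l)) (τ : Equiv.Perm (Fin m)) : Prop :=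
  ∃ b : Fin l → Fin m, StrictMono b ∧ ∀ i j : Fin l, σ i < σ j ↔ τ (b i) < τ (b j)

open Finset Equiv Function Nat

theorem Equiv.Perm.eq_of_lt_iff_lt {n : ℕ} {σ ρ : Perm (Fin n)}
    (h : ∀ i j, σ i < σ j ↔ ρ i < ρ j) : σ = ρ := by
  have hmono : StrictMono (σ * ρ⁻¹) := fun i j hij => by
    simpa [h] using hij
  exact mul_inv_eq_one.1 ((Perm.monotone_iff _).1 hmono.monotone)

section Standardize

variable {n : ℕ} {α : Type*} [LinearOrder α] {f : Fin n → α}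

noncomputable def standardize (f : Fin n → α) : Perm (Fin n) :=
  (Tuple.sort f)⁻¹

theorem standardize_lt_standardize_iff (hf : Injective f) (i j : Fin n) :
    standardize f i < standardize f j ↔ f i < f j := by
  have hsorted : StrictMono (f ∘ Tuple.sort f) :=
    (Tuple.monotone_sort f).strictMono_of_injective (hf.comp (Tuple.sort f).injective)
  conv_rhs => rw [← (Tuple.sort f).apply_symm_apply i, ← (Tuple.sort f).apply_symm_apply j]
  exact hsorted.lt_iff_lt.symm

theorem standardize_eq_iff (hf : Injective f) {σ : Perm (Fin n)} :
    standardize f = σ ↔ ∀ i j, σ i < σ j ↔ f i < f j := by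
  refine ⟨?_, fun h => Perm.eq_of_lt_iff_lt fun i j => ?_⟩
  · rintro rfl
    exact standardize_lt_standardize_iff hf
  · rw [standardize_lt_standardize_iff hf, h]

end Standardize

section PrefixPattern

variable {l m k : ℕ}

noncomputable def prefixPattern (h : l ≤ k) (τ : Perm (Fin k)) : Perm (Fin l) :=
  standardize (τ ∘ Fin.castLE h)

theorem prefixPattern_eq_iff (h : l ≤ k) (τ : Perm (Fin k)) (σ : Perm (Fin l)) :
    prefixPattern h τ = σ ↔ ∀ i j, σ i < σ j ↔ τ (Fin.castLE h i) < τ (Fin.castLE h j) :=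
  standardize_eq_iff (τ.injective.comp (Fin.castLE_injective h))

theorem prefixPattern_lt_prefixPattern_iff (h : l ≤ k) (τ : Perm (Fin k)) (i j : Fin l) :
    prefixPattern h τ i < prefixPattern h τ j ↔ τ (Fin.castLE h i) < τ (Fin.castLE h j) :=
  (prefixPattern_eq_iff h τ _).1 rfl i j

theorem prefixPattern_mul_viaEmbeddingHom (h : l ≤ k) (τ : Perm (Fin k)) (σ : Perm (Fin l)) :
    prefixPattern h (τ * Perm.viaEmbeddingHom (Fin.castLEEmb h) σ) = prefixPattern h τ * σ := by
  rw [prefixPattern_eq_iff]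
  intro i j
  have hext : ∀ x, Perm.viaEmbeddingHom (Fin.castLEEmb h) σ (Fin.castLE h x) =
      Fin.castLE h (σ x) := Perm.viaEmbedding_apply σ (Fin.castLEEmb h)
  rw [Perm.mul_apply, Perm.mul_apply, Perm.mul_apply, Perm.mul_apply, hext, hext,
    prefixPattern_lt_prefixPattern_iff]

theorem prefixPattern_prefixPattern (hlm : l ≤ m) (hmk : m ≤ k) (τ : Perm (Fin k)) :
    prefixPattern hlm (prefixPattern hmk τ) = prefixPattern (hlm.trans hmk) τ := by
  rw [prefixPattern_eq_iff]
  intro i j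
  rw [prefixPattern_lt_prefixPattern_iff, prefixPattern_lt_prefixPattern_iff]
  rfl

theorem isPattern_prefixPattern (h : l ≤ m) (ρ : Perm (Fin m)) :
    IsPattern (prefixPattern h ρ) ρ :=
  ⟨Fin.castLE h, Fin.strictMono_castLE h, prefixPattern_lt_prefixPattern_iff h ρ⟩

end PrefixPattern

theorem card_fiber_mul_card_eq_card {G H : Type*} [Group G] [Group H] [Fintype G] [Fintype H]
    [DecidableEq H] (ψ : H →* G) (f : G → H) (hf : ∀ g h, f (g * ψ h) = f g * h) (h : H) :
    #{g | f g = h} * Fintype.card H = Fintype.card G := by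
  have hfiber : ∀ h', #{g | f g = h'} = #{g | f g = h} := fun h' =>
    card_nbij' (· * ψ (h'⁻¹ * h)) (· * ψ (h⁻¹ * h'))
      (fun g hg => by simp_all only [coe_filter_univ, Set.mem_ofPred_eq, mul_inv_cancel_left])
      (fun g hg => by simp_all only [coe_filter_univ, Set.mem_ofPred_eq, mul_inv_cancel_left])
      (fun g _ => by simp [mul_assoc, ← map_mul]) (fun g _ => by simp [mul_assoc, ← map_mul])
  calc #{g | f g = h} * Fintype.card H = ∑ h' : H, #{g | f g = h'} := by
        simp [hfiber, mul_comm]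
    _ = Fintype.card G := (card_eq_sum_card_fiberwise fun _ _ => mem_univ _).symm

theorem card_prefixPattern_eq_mul_factorial {l k : ℕ} (h : l ≤ k) (σ : Perm (Fin l)) :
    #{τ | prefixPattern h τ = σ} * l ! = k ! := by
  classical
  simpa [Fintype.card_perm] using
    card_fiber_mul_card_eq_card _ _ (prefixPattern_mul_viaEmbeddingHom h) σ

theorem isPattern_or_isPattern_of_prefixPattern_eq {l m k : ℕ} {σ : Perm (Fin l)}
    {ρ : Perm (Fin m)} {τ : Perm (Fin k)} (hl : l ≤ k) (hm : m ≤ k)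
    (hσ : prefixPattern hl τ = σ) (hρ : prefixPattern hm τ = ρ) :
    IsPattern σ ρ ∨ IsPattern ρ σ := by
  subst hσ hρ
  rcases le_total l m with hlm | hml
  · left
    simpa [prefixPattern_prefixPattern] using isPattern_prefixPattern hlm (prefixPattern hm τ)
  · right
    simpa [prefixPattern_prefixPattern] using isPattern_prefixPattern hml (prefixPattern hl τ)

/-- **Kraft-type inequality for pattern-free permutation codes** `c : S → 𝕋_k`:
`ℙ_c = ∑_{l=1}^k a_l / l! ≤ 1`. -/
theorem permutation_constant_le_one_pattern_free
    {S : Type*} [Fintype S] (k : ℕ) (c : S → (l : ℕ) × Equiv.Perm (Fin l))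
    (hcode : ∀ s, 1 ≤ (c s).1 ∧ (c s).1 ≤ k)
    (hinj : Function.Injective c)
    (hfree : ∀ s t : S, IsPattern (c s).2 (c t).2 → c s = c t)
    (a : ℕ → ℕ) (ha : ∀ l, a l = Nat.card {s : S // (c s).1 = l}) :
    ∑ l ∈ Finset.Icc 1 k, (a l : ℝ) / l.factorial ≤ 1 := by
  classical
  let B (s : S) : Finset (Perm (Fin k)) := {τ | prefixPattern (hcode s).2 τ = (c s).2}
  have hdisj : ((univ : Finset S) : Set S).PairwiseDisjoint B := fun s _ t _ hst =>
    disjoint_left.2 fun τ hτs hτt => hst <| hinj <| by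
      simp only [B, mem_filter_univ] at hτs hτt
      rcases isPattern_or_isPattern_of_prefixPattern_eq _ _ hτs hτt with hst | hts
      exacts [hfree s t hst, (hfree t s hts).symm]
  have hcard (s : S) : (#(B s) : ℝ) = k ! / (c s).1 ! := by
    rw [eq_div_iff (by positivity)]
    exact_mod_cast card_prefixPattern_eq_mul_factorial (hcode s).2 (c s).2
  have hsum : ∑ s, #(B s) ≤ k ! := by
    simpa [card_biUnion hdisj, Fintype.card_perm] using card_le_univ (univ.biUnion B)
  have hregroup : ∑ l ∈ Icc 1 k, (a l : ℝ) / l ! = ∑ s, 1 / ((c s).1 ! : ℝ) := by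
    rw [← sum_fiberwise_of_maps_to (g := fun s => (c s).1) fun s _ => mem_Icc.2 (hcode s)]
    refine sum_congr rfl fun l _ => ?_
    rw [sum_congr rfl fun s hs => by rw [(mem_filter.1 hs).2], sum_const, ha,
      Nat.card_eq_fintype_card, Fintype.card_subtype, nsmul_eq_mul, mul_one_div]
  calc ∑ l ∈ Icc 1 k, (a l : ℝ) / l ! = (∑ s, #(B s) : ℕ) / (k ! : ℝ) := by
        rw [hregroup, Nat.cast_sum, sum_div]
        refine sum_congr rfl fun s _ => ?_
        rw [hcard, div_div_cancel_left' (by positivity), one_div]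
    _ ≤ 1 := div_le_one_of_le₀ (by exact_mod_cast hsum) (by positivity)
end

section
/- For any alphabet S₂ of size r ≥ 2, there exists a parameter sequence (a₀, a₁, …) with ∑_i a_i / r^i ≤ 1 such that no subsequence-free code c : S₁ → S₂* has that parameter sequence. Specifically, taking a₁ = r − 1, a₂ = r, and a_j = 0 otherwise works. -/
open scoped ENNReal

/-- **Failure of the McMillan converse for subsequence-free codes.** For an alphabet
of size `r ≥ 2`, the parameter sequence with `a₁ = r - 1`, `a₂ = r` and `aⱼ = 0`
otherwise has Kraft sum at most `1`, yet no subsequence-free code realizes it. -/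
theorem no_subsequence_free_code
    (r : ℕ) (hr : 2 ≤ r) (a : ℕ → ℕ)
    (h1 : a 1 = r - 1) (h2 : a 2 = r) (h0 : ∀ i, i ≠ 1 → i ≠ 2 → a i = 0) :
    (∑' i : ℕ, (a i : ℝ≥0∞) / (r : ℝ≥0∞) ^ i ≤ 1) ∧
    ¬ ∃ (S₁ : Type) (c : S₁ → List (Fin r)),
        Function.Injective c ∧
        (∀ s t : S₁, (c s).Sublist (c t) → c s = c t) ∧
        ∀ i, Nat.card {s : S₁ // (c s).length = i} = a i := by
  have hrne : (r : ℝ≥0∞) ≠ 0 := by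
    simp; omega
  have hrtop : (r : ℝ≥0∞) ≠ ⊤ := ENNReal.natCast_ne_top r
  constructor
  · have hsum : (∑' i : ℕ, (a i : ℝ≥0∞) / (r : ℝ≥0∞) ^ i)
        = ∑ i ∈ ({1, 2} : Finset ℕ), (a i : ℝ≥0∞) / (r : ℝ≥0∞) ^ i := by
      apply tsum_eq_sum
      intro i hi
      simp only [Finset.mem_insert, Finset.mem_singleton] at hi
      push_neg at hi
      rw [h0 i hi.1 hi.2]
      simp
    rw [hsum]
    rw [Finset.sum_insert (by simp), Finset.sum_singleton, h1, h2]
    have e1 : (r : ℝ≥0∞) / (r : ℝ≥0∞) ^ 2 = 1 / (r : ℝ≥0∞) := by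
      rw [pow_two]
      rw [show (r : ℝ≥0∞) / ((r:ℝ≥0∞) * (r:ℝ≥0∞)) = ((r:ℝ≥0∞) * 1) / ((r:ℝ≥0∞) * (r:ℝ≥0∞)) by ring_nf]
      exact ENNReal.mul_div_mul_left 1 _ hrne hrtop
    rw [e1, pow_one, ENNReal.div_add_div_same]
    have e2 : ((r - 1 : ℕ) : ℝ≥0∞) + 1 = (r : ℝ≥0∞) := by
      rw [show (1 : ℝ≥0∞) = ((1 : ℕ) : ℝ≥0∞) by simp, ← Nat.cast_add,
        Nat.sub_add_cancel (by omega)]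
    rw [e2, ENNReal.div_self hrne hrtop]
  · rintro ⟨S₁, c, hinj, hsub, hcard⟩
    set T1 := {s : S₁ // (c s).length = 1} with hT1
    set T2 := {s : S₁ // (c s).length = 2} with hT2
    have hc1 : Nat.card T1 = r - 1 := by rw [hcard 1, h1]
    have hc2 : Nat.card T2 = r := by rw [hcard 2, h2]
    have hfin1 : Finite T1 := Nat.finite_of_card_ne_zero (by omega)
    have hfin2 : Finite T2 := Nat.finite_of_card_ne_zero (by omega)
    -- each length-1 codeword is a singleton
    have hone : ∀ s : T1, ∃ y, c s.1 = [y] := fun s => List.length_eq_one_iff.mp s.2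
    choose f hf using hone
    have hfinj : Function.Injective f := by
      intro s t hst
      have : c s.1 = c t.1 := by rw [hf s, hf t, hst]
      exact Subtype.ext (hinj this)
    -- letters of length-2 codewords avoid the range of f
    have havoid : ∀ (t : T2) (y : Fin r), y ∈ c t.1 → y ∉ Set.range f := by
      rintro t y hy ⟨s, rfl⟩
      have hsl : (c s.1).Sublist (c t.1) := by
        rw [hf s]; exact List.singleton_sublist.mpr hy
      have := hsub _ _ hsl
      have h1' := s.2
      have h2' := t.2
      rw [this] at h1'
      omega
    have := Fintype.ofFinite T1
    -- the image of f has r-1 elements, so complement has a unique element x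
    set A : Finset (Fin r) := Finset.univ.image f with hA
    have hAcard : A.card = r - 1 := by
      rw [hA, Finset.card_image_of_injective _ hfinj, Finset.card_univ,
        ← Nat.card_eq_fintype_card, hc1]
    have hAc : Aᶜ.card = 1 := by
      rw [Finset.card_compl, Fintype.card_fin, hAcard]; omega
    obtain ⟨x, hx⟩ := Finset.card_eq_one.mp hAc
    have hmem : ∀ (t : T2) (y : Fin r), y ∈ c t.1 → y = x := by
      intro t y hy
      have : y ∈ Aᶜ := by
        rw [Finset.mem_compl, hA, Finset.mem_image]
        rintro ⟨s, -, rfl⟩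
        exact havoid t (f s) hy ⟨s, rfl⟩
      rw [hx, Finset.mem_singleton] at this
      exact this
    have hxx : ∀ t : T2, c t.1 = [x, x] := by
      intro t
      obtain ⟨u, v, huv⟩ := List.length_eq_two.mp t.2
      have hu : u = x := hmem t u (by rw [huv]; simp)
      have hv : v = x := hmem t v (by rw [huv]; simp)
      rw [huv, hu, hv]
    have hsub2 : ∀ t t' : T2, t = t' := by
      intro t t'
      exact Subtype.ext (hinj (by rw [hxx t, hxx t']))
    have : Nat.card T2 = 1 := by
      have : Subsingleton T2 := ⟨hsub2⟩
      have ht : Nonempty T2 := Nat.card_pos_iff.mp (by omega) |>.1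
      exact Nat.card_of_subsingleton ht.some
    omega
end

section
/- In the poset of strings over an alphabet of size r ordered by the substring (consecutive) relation counted with multiplicity of boundary deletions, every string of length l+1 ≥ 2 covers with multiplicity exactly 2 strings of length l (deleting the first or last symbol), and every string of length l ≥ 1 is covered with multiplicity exactly 2r (prepending or appending any symbol); consequently any substring-free code c : S₁ → S₂*, |S₂| = r, satisfies the Kraft inequality ∑_i a_i/r^i ≤ 1. -/
open scoped ENNReal

/-- The graph of a function `f : α → β`, viewed as a subtype of `α × β`, is
equivalent to `α`. -/
def graphEquiv' {α β : Type*} (f : α → β) : {p : α × β // p.2 = f p.1} ≃ α where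
  toFun p := p.1.1
  invFun a := ⟨(a, f a), rfl⟩
  left_inv := by rintro ⟨⟨a, b⟩, h⟩; exact Subtype.ext (by simp only [Prod.mk.injEq]; exact ⟨trivial, h.symm⟩)
  right_inv a := rfl

/-- The natural-number counting version of the Kraft inequality for prefix-free codes:
`∑ s, r ^ (N - |c s|) ≤ r ^ N`. -/
lemma kraft_nat_count {S₂ : Type*} [Fintype S₂] {S₁ : Type} [Fintype S₁]
    (c : S₁ → List S₂) (hpf : ∀ s t : S₁, c s <+: c t → s = t)
    (N : ℕ) (hN : ∀ s, (c s).length ≤ N) :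
    ∑ s : S₁, Fintype.card S₂ ^ (N - (c s).length) ≤ Fintype.card S₂ ^ N := by
  classical
  set V := List.Vector S₂ N
  set A : S₁ → Finset V := fun s => Finset.univ.filter (fun v => c s <+: v.toList) with hA
  have hdisj : ∀ s ∈ Finset.univ (α := S₁), ∀ t ∈ Finset.univ (α := S₁), s ≠ t →
      Disjoint (A s) (A t) := by
    intro s _ t _ hst
    rw [Finset.disjoint_left]
    intro v hvs hvt
    simp only [hA, Finset.mem_filter] at hvs hvt
    rcases List.prefix_or_prefix_of_prefix hvs.2 hvt.2 with h | h
    · exact hst (hpf s t h)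
    · exact hst (hpf t s h).symm
  have hcard : ∀ s : S₁, Fintype.card S₂ ^ (N - (c s).length) ≤ (A s).card := by
    intro s
    have : Function.Injective
        (fun w : List.Vector S₂ (N - (c s).length) =>
          (⟨⟨c s ++ w.toList, by
              simp [w.2, Nat.add_sub_cancel' (hN s)]⟩,
            ⟨w.toList, rfl⟩⟩ : {v : V // c s <+: v.toList})) := by
      intro w₁ w₂ h
      have h' : c s ++ w₁.toList = c s ++ w₂.toList := congrArg (fun x => x.1.1) h
      exact Subtype.ext (List.append_cancel_left h')
    have h1 : Fintype.card (List.Vector S₂ (N - (c s).length)) ≤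
        Fintype.card {v : V // c s <+: v.toList} := Fintype.card_le_of_injective _ this
    rwa [card_vector, Fintype.card_subtype] at h1
  calc ∑ s : S₁, Fintype.card S₂ ^ (N - (c s).length)
      ≤ ∑ s : S₁, (A s).card := Finset.sum_le_sum fun s _ => hcard s
    _ = (Finset.univ.biUnion A).card := (Finset.card_biUnion hdisj).symm
    _ ≤ Fintype.card V := Finset.card_le_univ _
    _ = Fintype.card S₂ ^ N := card_vector N

/-- In the poset of strings over an alphabet of size `r` ordered by the substring
relation (with multiplicity of boundary deletions): every string of length `l+1 ≥ 2`
covers with multiplicity exactly `2` strings of length `l` (deleting the first or the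
last symbol), every string of length `l ≥ 1` is covered with multiplicity exactly
`2·r` (prepending or appending any symbol); consequently every substring-free code
satisfies the Kraft inequality `∑ aᵢ / rⁱ ≤ 1`. -/
theorem substring_poset_degrees_and_kraft
    {S₂ : Type*} [Fintype S₂] (r : ℕ) (hr : Fintype.card S₂ = r) :
    (∀ l : ℕ, 1 ≤ l → ∀ τ : List S₂, τ.length = l + 1 →
      Nat.card {p : Bool × List S₂ //
        p.2 = (if p.1 then τ.tail else τ.dropLast)} = 2) ∧
    (∀ l : ℕ, 1 ≤ l → ∀ σ : List S₂, σ.length = l →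
      Nat.card {p : (Bool × S₂) × List S₂ //
        p.2 = (if p.1.1 then p.1.2 :: σ else σ ++ [p.1.2])} = 2 * r) ∧
    (∀ (S₁ : Type) [Fintype S₁], ∀ c : S₁ → List S₂, Function.Injective c →
      (∀ s t : S₁, c s <:+: c t → c s = c t) →
      ∑' i : ℕ, (Nat.card {s : S₁ // (c s).length = i} : ℝ≥0∞) / (r : ℝ≥0∞) ^ i ≤ 1) := by
  classical
  refine ⟨?_, ?_, ?_⟩
  · intro l _ τ _
    rw [Nat.card_congr (graphEquiv' (fun b : Bool => if b then τ.tail else τ.dropLast))]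
    simp
  · intro l _ σ _
    rw [Nat.card_congr (graphEquiv'
      (fun p : Bool × S₂ => if p.1 then p.2 :: σ else σ ++ [p.2]))]
    rw [Nat.card_prod, Nat.card_eq_fintype_card, Nat.card_eq_fintype_card,
      Fintype.card_bool, hr]
  · intro S₁ _ c hinj hinf
    have hpf : ∀ s t : S₁, c s <+: c t → s = t :=
      fun s t h => hinj (hinf s t h.isInfix)
    -- rewrite the tsum as a finite sum over codewords
    have key : ∀ i : ℕ, (Nat.card {s : S₁ // (c s).length = i} : ℝ≥0∞) / (r : ℝ≥0∞) ^ i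
        = ∑ s : S₁, if (c s).length = i then (((r : ℝ≥0∞)) ^ i)⁻¹ else 0 := by
      intro i
      rw [div_eq_mul_inv, Nat.card_eq_fintype_card, Fintype.card_subtype,
        ← Finset.sum_filter, Finset.sum_const, nsmul_eq_mul]
    have hsum : ∑' i : ℕ, (Nat.card {s : S₁ // (c s).length = i} : ℝ≥0∞) / (r : ℝ≥0∞) ^ i
        = ∑ s : S₁, (((r : ℝ≥0∞)) ^ (c s).length)⁻¹ := by
      calc ∑' i : ℕ, (Nat.card {s : S₁ // (c s).length = i} : ℝ≥0∞) / (r : ℝ≥0∞) ^ i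
          = ∑' i : ℕ, ∑ s : S₁, (if (c s).length = i then (((r : ℝ≥0∞)) ^ i)⁻¹ else 0) := by
            exact tsum_congr key
        _ = ∑ s : S₁, ∑' i : ℕ, (if (c s).length = i then (((r : ℝ≥0∞)) ^ i)⁻¹ else 0) :=
            Summable.tsum_finsetSum fun _ _ => ENNReal.summable
        _ = ∑ s : S₁, (((r : ℝ≥0∞)) ^ (c s).length)⁻¹ := by
            refine Finset.sum_congr rfl fun s _ => ?_
            rw [tsum_eq_single (c s).length (fun i hi => if_neg fun h => hi h.symm),
              if_pos rfl]
    rw [hsum]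
    by_cases hr0 : r = 0
    · -- empty alphabet: at most one codeword, which is empty
      subst hr0
      have hS₂ : IsEmpty S₂ := Fintype.card_eq_zero_iff.mp hr
      have hnil : ∀ s : S₁, c s = [] := by
        intro s
        cases h : c s with
        | nil => rfl
        | cons a _ => exact (hS₂.false a).elim
      have hsub : Subsingleton S₁ :=
        ⟨fun s t => hinj (by rw [hnil s, hnil t])⟩
      have hc1 : Fintype.card S₁ ≤ 1 := Fintype.card_le_one_iff_subsingleton.mpr hsub
      calc ∑ s : S₁, (((0 : ℕ) : ℝ≥0∞) ^ (c s).length)⁻¹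
          = ∑ s : S₁, 1 := by
            refine Finset.sum_congr rfl fun s _ => ?_
            rw [hnil s]; simp
        _ = (Fintype.card S₁ : ℝ≥0∞) := by simp
        _ ≤ 1 := by exact_mod_cast hc1
    · -- nonempty alphabet: use the counting bound
      have hrne : ((r : ℝ≥0∞)) ≠ 0 := by exact_mod_cast hr0
      have hrtop : ((r : ℝ≥0∞)) ≠ ⊤ := ENNReal.natCast_ne_top r
      set N := Finset.univ.sup (fun s : S₁ => (c s).length) with hNdef
      have hN : ∀ s : S₁, (c s).length ≤ N :=
        fun s => Finset.le_sup (f := fun s : S₁ => (c s).length) (Finset.mem_univ s)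
      have hcount : ∑ s : S₁, r ^ (N - (c s).length) ≤ r ^ N := by
        have := kraft_nat_count c hpf N hN
        rwa [hr] at this
      have hcast : ∑ s : S₁, ((r : ℝ≥0∞)) ^ (N - (c s).length) ≤ ((r : ℝ≥0∞)) ^ N := by
        exact_mod_cast hcount
      have hterm : ∀ s : S₁, (((r : ℝ≥0∞)) ^ (c s).length)⁻¹
          = ((r : ℝ≥0∞)) ^ (N - (c s).length) * (((r : ℝ≥0∞)) ^ N)⁻¹ := by
        intro s
        have hl := hN s
        calc (((r : ℝ≥0∞)) ^ (c s).length)⁻¹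
            = 1 * (((r : ℝ≥0∞)) ^ (c s).length)⁻¹ := (one_mul _).symm
          _ = (((r : ℝ≥0∞)) ^ (N - (c s).length) * (((r : ℝ≥0∞)) ^ (N - (c s).length))⁻¹)
                * (((r : ℝ≥0∞)) ^ (c s).length)⁻¹ := by
              rw [ENNReal.mul_inv_cancel (pow_ne_zero _ hrne) (ENNReal.pow_ne_top hrtop)]
          _ = ((r : ℝ≥0∞)) ^ (N - (c s).length)
                * ((((r : ℝ≥0∞)) ^ (N - (c s).length))⁻¹ * (((r : ℝ≥0∞)) ^ (c s).length)⁻¹) :=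
              mul_assoc _ _ _
          _ = ((r : ℝ≥0∞)) ^ (N - (c s).length)
                * (((r : ℝ≥0∞)) ^ (N - (c s).length) * ((r : ℝ≥0∞)) ^ (c s).length)⁻¹ := by
              rw [ENNReal.mul_inv (Or.inl (pow_ne_zero _ hrne))
                (Or.inl (ENNReal.pow_ne_top hrtop))]
          _ = ((r : ℝ≥0∞)) ^ (N - (c s).length) * (((r : ℝ≥0∞)) ^ N)⁻¹ := by
              rw [← pow_add, Nat.sub_add_cancel hl]
      calc ∑ s : S₁, (((r : ℝ≥0∞)) ^ (c s).length)⁻¹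
          = (∑ s : S₁, ((r : ℝ≥0∞)) ^ (N - (c s).length)) * (((r : ℝ≥0∞)) ^ N)⁻¹ := by
            rw [Finset.sum_mul]
            exact Finset.sum_congr rfl fun s _ => hterm s
        _ ≤ ((r : ℝ≥0∞)) ^ N * (((r : ℝ≥0∞)) ^ N)⁻¹ := mul_le_mul_left hcast _
        _ = 1 := ENNReal.mul_inv_cancel (pow_ne_zero _ hrne) (ENNReal.pow_ne_top hrtop)
end

section
/- For every k ≥ 3 there is a parameter sequence (a₀, a₁, …) with ℙ_c = ∑_{l=1}^k a_l / l! ≤ 1 for which no pattern-free permutation code c : S → 𝕋_k exists with that parameter sequence. -/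
instance {l m : ℕ} (σ : Equiv.Perm (Fin l)) (τ : Equiv.Perm (Fin m)) :
    Decidable (IsPattern σ τ) :=
  decidable_of_iff
    (∃ b : Fin l → Fin m, (∀ ⦃i j : Fin l⦄, i < j → b i < b j) ∧
      ∀ i j : Fin l, σ i < σ j ↔ τ (b i) < τ (b j)) Iff.rfl

lemma key_pattern : ∀ σ : Equiv.Perm (Fin 2), ∀ τ₁ τ₂ : Equiv.Perm (Fin 3),
    τ₁ = τ₂ ∨ IsPattern σ τ₁ ∨ IsPattern σ τ₂ := by decide

lemma sigma_eq {p : (l : ℕ) × Equiv.Perm (Fin l)} {n : ℕ} (h : p.1 = n) :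
    ∃ σ : Equiv.Perm (Fin n), p = ⟨n, σ⟩ := by
  obtain ⟨l, σ⟩ := p
  subst h
  exact ⟨σ, rfl⟩

/-- **Failure of the McMillan converse for pattern-free permutation codes.** For
every `k ≥ 3` there is a parameter sequence with `ℙ_c = ∑_{l=1}^k a_l / l! ≤ 1` for
which no pattern-free permutation code `c : S → 𝕋_k` exists. -/
theorem no_pattern_free_code (k : ℕ) (hk : 3 ≤ k) :
    ∃ a : ℕ → ℕ,
      (∀ l, l = 0 ∨ k < l → a l = 0) ∧
      (∑ l ∈ Finset.Icc 1 k, (a l : ℝ) / l.factorial ≤ 1) ∧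
      ¬ ∃ (S : Type) (c : S → (l : ℕ) × Equiv.Perm (Fin l)),
          Function.Injective c ∧
          (∀ s, 1 ≤ (c s).1 ∧ (c s).1 ≤ k) ∧
          (∀ s t : S, IsPattern (c s).2 (c t).2 → c s = c t) ∧
          ∀ l, Nat.card {s : S // (c s).1 = l} = a l := by
  refine ⟨fun l => if l = 2 then 1 else if l = 3 then 3 else 0, ?_, ?_, ?_⟩
  · rintro l (rfl | hl)
    · norm_num
    · have h2 : l ≠ 2 := by omega
      have h3 : l ≠ 3 := by omega
      simp [h2, h3]
  · have hsub : ({2, 3} : Finset ℕ) ⊆ Finset.Icc 1 k := by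
      intro x hx
      simp only [Finset.mem_insert, Finset.mem_singleton] at hx
      rcases hx with rfl | rfl <;> simp [Finset.mem_Icc] <;> omega
    rw [← Finset.sum_subset hsub]
    · norm_num [Nat.factorial]
    · intro x _ hx
      simp only [Finset.mem_insert, Finset.mem_singleton, not_or] at hx
      simp [hx.1, hx.2]
  · rintro ⟨S, c, hinj, hrange, hpat, hcard⟩
    have hcard2 : Nat.card {s : S // (c s).1 = 2} = 1 := by simpa using hcard 2
    have hcard3 : Nat.card {s : S // (c s).1 = 3} = 3 := by simpa using hcard 3
    -- get the length-2 codeword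
    have hne2 : Nonempty {s : S // (c s).1 = 2} :=
      (Nat.card_pos_iff.mp (by rw [hcard2]; norm_num)).1
    obtain ⟨s₀, hs₀⟩ := hne2
    -- get two distinct length-3 codewords
    have hfin3 : Finite {s : S // (c s).1 = 3} :=
      (Nat.card_pos_iff.mp (by rw [hcard3]; norm_num)).2
    have hnt : Nontrivial {s : S // (c s).1 = 3} :=
      Finite.one_lt_card_iff_nontrivial.mp (by rw [hcard3]; norm_num)
    obtain ⟨⟨x, hx⟩, ⟨y, hy⟩, hxy⟩ := hnt.exists_pair_ne
    have hxy' : x ≠ y := fun h => hxy (Subtype.ext h)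
    obtain ⟨σ, hσ⟩ := sigma_eq hs₀
    obtain ⟨τ₁, hτ₁⟩ := sigma_eq hx
    obtain ⟨τ₂, hτ₂⟩ := sigma_eq hy
    have hτne : τ₁ ≠ τ₂ := by
      intro h
      apply hxy'
      apply hinj
      rw [hτ₁, hτ₂, h]
    rcases key_pattern σ τ₁ τ₂ with h | h | h
    · exact hτne h
    · have hp : IsPattern (c s₀).2 (c x).2 := by rw [hσ, hτ₁]; exact h
      have := hpat s₀ x hp
      rw [hσ, hτ₁] at this
      simp at this
    · have hp : IsPattern (c s₀).2 (c y).2 := by rw [hσ, hτ₂]; exact h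
      have := hpat s₀ y hp
      rw [hσ, hτ₂] at this
      simp at this
end
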